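/- Let 𝒢 be a TVG in class B with bound Δ whose underlying connected graph has n ≥ 2 vertices, and let s be any vertex. Then the minimal arrival time OPT of a covering journey from s at time 0 satisfies n − 1 ≤ OPT ≤ Δ(2n − 3); in particular, the journey obtained by following any covering walk of length at most 2n − 3 from s (waiting at most Δ − 1 steps before each edge traversal) is a covering journey whose arrival time is at most Δ(2n − 3) < 2Δ(n − 1) ≤ 2Δ·OPT. -/

import Mathlib

/-- A time-varying graph (TVG): an underlying simple graph together with a presence
function telling when each (directed rendering of an) edge is available; every edge
takes one time step to cross. -/
structure TVG (V : Type) where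
  G : SimpleGraph V
  avail : V → V → ℕ → Prop

namespace TVG

variable {V : Type}

/-- A step of a journey: traverse the edge from `x.1` to `x.2.1`, starting at time
`x.2.2` and arriving at time `x.2.2 + 1`. -/
abbrev Step (V : Type) := V × V × ℕ

/-- Consecutive steps of a journey: the next step starts where the previous one ended,
at a strictly later time (waiting in between is allowed). -/
def Linked (a b : Step V) : Prop := b.1 = a.2.1 ∧ a.2.2 + 1 ≤ b.2.2

/-- A journey: each step crosses an edge of the underlying graph that is available at
that time, and consecutive steps are linked. -/
def IsJourney (𝒢 : TVG V) (J : List (Step V)) : Prop :=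
  (∀ x ∈ J, 𝒢.G.Adj x.1 x.2.1 ∧ 𝒢.avail x.1 x.2.1 x.2.2) ∧ J.Chain' Linked

/-- The journey starts at vertex `u`. -/
def startsAt (J : List (Step V)) (u : V) : Prop := ∀ x ∈ J.head?, x.1 = u

/-- The journey departs at or after time `t`. -/
def departsAfter (J : List (Step V)) (t : ℕ) : Prop := ∀ x ∈ J.head?, t ≤ x.2.2

/-- Departure date of a journey started at time `t0`. -/
def departure (J : List (Step V)) (t0 : ℕ) : ℕ := (J.head?).elim t0 fun x => x.2.2

/-- Arrival date of a journey started at time `t0`. -/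
def arrival (J : List (Step V)) (t0 : ℕ) : ℕ := (J.getLast?).elim t0 fun x => x.2.2 + 1

/-- Final vertex of a journey started at vertex `s`. -/
def endAt (J : List (Step V)) (s : V) : V := (J.getLast?).elim s fun x => x.2.1

/-- The journey, started at `s`, visits (covers) vertex `v`. -/
def visits (J : List (Step V)) (s v : V) : Prop := v = s ∨ ∃ x ∈ J, x.2.1 = v

/-- A covering journey from `s` starting at time `0`: a journey that starts at `s`
and visits every vertex. -/
def IsCoveringFrom (𝒢 : TVG V) (J : List (Step V)) (s : V) : Prop :=
  𝒢.IsJourney J ∧ startsAt J s ∧ ∀ v : V, visits J s v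

/-- Class `R` (recurrent edges): connected underlying graph, lifetime `ℕ`, and every
edge is available at arbitrarily late times. -/
def ClassR (𝒢 : TVG V) : Prop :=
  𝒢.G.Connected ∧ ∀ u v, 𝒢.G.Adj u v → ∀ t, ∃ t', t < t' ∧ 𝒢.avail u v t'

/-- Class `B` (time-bounded recurrent edges): every edge is available at some time in
`[t, t + Δ)` for every `t`. -/
def ClassB (𝒢 : TVG V) (Δ : ℕ) : Prop :=
  𝒢.G.Connected ∧ ∀ u v, 𝒢.G.Adj u v → ∀ t, ∃ t', t ≤ t' ∧ t' < t + Δ ∧ 𝒢.avail u v t'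

/-- Class `P` (periodic edges): the presence function is periodic with period `p`. -/
def ClassP (𝒢 : TVG V) (p : ℕ) : Prop :=
  𝒢.G.Connected ∧ ∀ u v t, 𝒢.avail u v t ↔ 𝒢.avail u v (t + p)

/-- Presence function obtained by running the given (possibly time-dependent) edge
relations for the given durations, one block after another, starting at time `0`;
each block relation receives the local time within its block. -/
def schedAvail : List ((V → V → ℕ → Prop) × ℕ) → V → V → ℕ → Prop
  | [], _, _, _ => False
  | (r, d) :: rest, u, v, t => if t < d then r u v t else schedAvail rest u v (t - d)

end TVG

open TVG

/-! Following a covering walk and waiting at most `Δ - 1` steps before each edge costs at most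
`Δ` per edge. A covering walk of length at most `2n - 3` is obtained from a closed covering walk
of length at most `2(n - 1)`, grown one vertex at a time by an out-and-back detour along an edge
leaving the vertices visited so far, by dropping its last edge. Conversely, a covering journey
has at least `n - 1` steps, each taking one time unit. -/

namespace SimpleGraph

variable {V : Type} {G : SimpleGraph V}

lemma Walk.exists_detour {a b u v : V} (p : G.Walk a b) (hu : u ∈ p.support) (huv : G.Adj u v) :
    ∃ q : G.Walk a b, q.length = p.length + 2 ∧ v ∈ q.support ∧ ∀ x ∈ p.support, x ∈ q.support := by
  classical
  have hsplit := p.take_spec hu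
  refine ⟨(p.takeUntil u hu).append (cons huv (cons huv.symm (p.dropUntil u hu))), ?_, ?_, ?_⟩
  · have := congrArg Walk.length hsplit
    simp only [length_append, Walk.length_cons] at this ⊢
    omega
  · simp
  · intro x hx
    rw [← hsplit, mem_support_append_iff] at hx
    rw [mem_support_append_iff]
    rcases hx with hx | hx
    · exact Or.inl hx
    · simp [hx]

variable [Fintype V]

lemma Connected.exists_closed_walk_covering (hG : G.Connected) (s : V) :
    ∃ W : G.Walk s s, (∀ v, v ∈ W.support) ∧ W.length ≤ 2 * (Fintype.card V - 1) := by
  classical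
  suffices h : ∀ k ≤ Fintype.card V,
      ∃ W : G.Walk s s, k ≤ W.support.toFinset.card ∧ W.length ≤ 2 * (k - 1) by
    obtain ⟨W, hcard, hlen⟩ := h _ le_rfl
    have huniv := W.support.toFinset.eq_univ_of_card (le_antisymm (Finset.card_le_univ _) hcard)
    exact ⟨W, fun v => List.mem_toFinset.mp (huniv ▸ Finset.mem_univ v), hlen⟩
  intro k hk
  induction k with
  | zero => exact ⟨Walk.nil, Nat.zero_le _, le_rfl⟩
  | succ k ih =>
    obtain ⟨W, hcard, hlen⟩ := ih (by omega)
    have hs : 0 < W.support.toFinset.card := Finset.card_pos.mpr ⟨s, by simp⟩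
    by_cases hbig : k + 1 ≤ W.support.toFinset.card
    · exact ⟨W, hbig, by omega⟩
    have hlt : W.support.toFinset.card < (Finset.univ : Finset V).card := by
      rw [Finset.card_univ]; omega
    obtain ⟨v, -, hv⟩ := Finset.exists_mem_notMem_of_card_lt_card hlt
    obtain ⟨p⟩ := hG.preconnected s v
    obtain ⟨d, -, hd, hdv⟩ := p.exists_boundary_dart {x | x ∈ W.support} W.start_mem_support
      (by simpa using hv)
    obtain ⟨q, hqlen, hdq, hsub⟩ := W.exists_detour hd d.adj
    have hgrow : W.support.toFinset ⊂ q.support.toFinset :=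
      (Finset.ssubset_iff_of_subset fun x hx => by simpa using hsub x (by simpa using hx)).mpr
        ⟨d.snd, by simpa using hdq, by simpa using hdv⟩
    have := Finset.card_lt_card hgrow
    refine ⟨q, ?_, ?_⟩ <;> omega

lemma Connected.exists_walk_covering (hG : G.Connected) (hn : 2 ≤ Fintype.card V) (s : V) :
    ∃ (w : V) (W : G.Walk s w), (∀ v, v ∈ W.support) ∧ W.length ≤ 2 * Fintype.card V - 3 := by
  obtain ⟨W, hcov, hlen⟩ := hG.exists_closed_walk_covering s
  obtain ⟨u, hu⟩ := Fintype.exists_ne_of_one_lt_card hn s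
  cases W with
  | nil => exact absurd (by simpa using hcov u) hu
  | cons h p =>
    -- the closed walk also ends at `s`, so its first edge can be dropped (then reverse the rest)
    refine ⟨_, p.reverse, fun v => ?_, ?_⟩
    · have hv := hcov v
      rw [Walk.support_cons, List.mem_cons] at hv
      rw [Walk.support_reverse, List.mem_reverse]
      exact hv.elim (· ▸ p.end_mem_support) id
    · rw [Walk.length_cons] at hlen
      rw [Walk.length_reverse]
      omega

end SimpleGraph

namespace TVG

variable {V : Type}

lemma arrival_cons (a : Step V) (J : List (Step V)) (t : ℕ) :
    arrival (a :: J) t = arrival J (a.2.2 + 1) := by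
  cases J with
  | nil => rfl
  | cons b J =>
    simp only [arrival, List.getLast?_cons_cons, List.getLast?_eq_some_getLast (List.cons_ne_nil b J)]
    rfl

lemma add_length_le_arrival {J : List (Step V)} (hJ : J.IsChain Linked) {t : ℕ}
    (ht : departsAfter J t) : t + J.length ≤ arrival J t := by
  induction J generalizing t with
  | nil => simp [arrival]
  | cons a J ih =>
    obtain ⟨hlink, hJ⟩ := List.isChain_cons.mp hJ
    have := ih hJ (t := a.2.2 + 1) fun x hx => (hlink x hx).2
    have := ht a rfl
    rw [arrival_cons, List.length_cons]
    omega

lemma card_le_length_add_one [Fintype V] {J : List (Step V)} {s : V}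
    (hJ : ∀ v, visits J s v) : Fintype.card V ≤ J.length + 1 := by
  classical
  have hcov : Finset.univ ⊆ (s :: J.map (·.2.1)).toFinset := by
    intro v _
    rcases hJ v with rfl | ⟨x, hx, rfl⟩
    · simp
    · exact List.mem_toFinset.mpr (List.mem_cons_of_mem _ (List.mem_map_of_mem hx))
  calc Fintype.card V ≤ (s :: J.map (·.2.1)).toFinset.card := Finset.card_le_card hcov
    _ ≤ (s :: J.map (·.2.1)).length := List.toFinset_card_le _
    _ = J.length + 1 := by simp

lemma visits_of_map_eq_darts {G : SimpleGraph V} {J : List (Step V)} {u w v : V}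
    {W : G.Walk u w} (hJ : J.map (fun x => (x.1, x.2.1)) = W.darts.map (·.toProd))
    (hv : v ∈ W.support) : visits J u v := by
  rw [← W.cons_tail_support, List.mem_cons, ← W.map_snd_darts] at hv
  refine hv.imp id fun hv => ?_
  obtain ⟨d, hd, rfl⟩ := List.mem_map.mp hv
  obtain ⟨x, hx, hxd⟩ := List.mem_map.mp (hJ ▸ List.mem_map_of_mem hd : d.toProd ∈ J.map _)
  exact ⟨x, hx, congrArg Prod.snd hxd⟩

lemma exists_journey_along_walk (𝒢 : TVG V) {Δ : ℕ}
    (hB : ∀ u v, 𝒢.G.Adj u v → ∀ t, ∃ t', t ≤ t' ∧ t' < t + Δ ∧ 𝒢.avail u v t')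
    {u w : V} (W : 𝒢.G.Walk u w) (t : ℕ) :
    ∃ J, 𝒢.IsJourney J ∧ startsAt J u ∧ departsAfter J t ∧
      J.map (fun x => (x.1, x.2.1)) = W.darts.map (·.toProd) ∧
      arrival J t ≤ t + Δ * W.length := by
  induction W generalizing t with
  | nil => exact ⟨[], ⟨by simp, List.isChain_nil⟩, by simp [startsAt], by simp [departsAfter],
      rfl, by simp [arrival]⟩
  | @cons u v w huv W ih =>
    obtain ⟨t', htt', ht'Δ, hav⟩ := hB u v huv t
    obtain ⟨J, ⟨hsteps, hchain⟩, hstart, hdep, hmap, harr⟩ := ih (t' + 1)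
    refine ⟨(u, v, t') :: J, ⟨?_, ?_⟩, by simp [startsAt], by simpa [departsAfter] using htt',
      by simp [hmap], ?_⟩
    · exact List.forall_mem_cons.mpr ⟨⟨huv, hav⟩, hsteps⟩
    · exact List.isChain_cons.mpr ⟨fun x hx => ⟨hstart x hx, hdep x hx⟩, hchain⟩
    · rw [arrival_cons, SimpleGraph.Walk.length_cons, Nat.mul_succ]
      dsimp only
      omega

lemma exists_covering_journey_along_walk (𝒢 : TVG V) {Δ : ℕ}
    (hB : ∀ u v, 𝒢.G.Adj u v → ∀ t, ∃ t', t ≤ t' ∧ t' < t + Δ ∧ 𝒢.avail u v t')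
    {s w : V} (W : 𝒢.G.Walk s w) (hW : ∀ v, v ∈ W.support) :
    ∃ J, 𝒢.IsCoveringFrom J s ∧ J.map (fun x => (x.1, x.2.1)) = W.darts.map (·.toProd) ∧
      arrival J 0 ≤ Δ * W.length := by
  obtain ⟨J, hJ, hstart, -, hmap, harr⟩ := 𝒢.exists_journey_along_walk hB W 0
  exact ⟨J, ⟨hJ, hstart, fun v => visits_of_map_eq_darts hmap (hW v)⟩, hmap,
    zero_add (Δ * W.length) ▸ harr⟩

lemma ClassB.bound_pos [Nontrivial V] {𝒢 : TVG V} {Δ : ℕ} (hB : 𝒢.ClassB Δ) : 0 < Δ := by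
  obtain ⟨v⟩ := (inferInstance : Nonempty V)
  obtain ⟨u, huv⟩ := hB.1.preconnected.exists_adj_of_nontrivial v
  obtain ⟨t, ht0, htΔ, -⟩ := hB.2 v u huv 0
  omega

end TVG

open TVG

/-- For a TVG of class `B` with bound `Δ` on a connected graph with
`n ≥ 2` vertices, the minimal covering arrival time `OPT` from any `s` satisfies
`n - 1 ≤ OPT ≤ Δ(2n - 3)`; in particular, following any covering walk of length at most
`2n - 3` (waiting at most `Δ - 1` steps before each edge) yields a covering journey with
arrival time at most `Δ(2n - 3) < 2Δ(n - 1) ≤ 2Δ·OPT`. -/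
theorem classB_twoDelta_approx {V : Type} [Fintype V] (𝒢 : TVG V) (Δ : ℕ)
    (hB : 𝒢.ClassB Δ) (hn : 2 ≤ Fintype.card V) (s : V) (OPT : ℕ)
    (hOPT : IsLeast {t : ℕ | ∃ J, 𝒢.IsCoveringFrom J s ∧ arrival J 0 = t} OPT) :
    (Fintype.card V - 1 ≤ OPT ∧ OPT ≤ Δ * (2 * Fintype.card V - 3)) ∧
    (∀ (w : V) (W : 𝒢.G.Walk s w), (∀ v : V, v ∈ W.support) →
      W.length ≤ 2 * Fintype.card V - 3 →
      ∃ J, 𝒢.IsCoveringFrom J s ∧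
        J.map (fun x => (x.1, x.2.1)) = W.darts.map (fun d => d.toProd) ∧
        arrival J 0 ≤ Δ * (2 * Fintype.card V - 3)) ∧
    Δ * (2 * Fintype.card V - 3) < 2 * Δ * (Fintype.card V - 1) ∧
    2 * Δ * (Fintype.card V - 1) ≤ 2 * Δ * OPT := by
  have : Nontrivial V := Fintype.one_lt_card_iff_nontrivial.mp hn
  have hΔ : 0 < Δ := hB.bound_pos
  have follow : ∀ (w : V) (W : 𝒢.G.Walk s w), (∀ v : V, v ∈ W.support) →
      W.length ≤ 2 * Fintype.card V - 3 →
      ∃ J, 𝒢.IsCoveringFrom J s ∧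
        J.map (fun x => (x.1, x.2.1)) = W.darts.map (fun d => d.toProd) ∧
        arrival J 0 ≤ Δ * (2 * Fintype.card V - 3) := fun w W hW hlen =>
    (𝒢.exists_covering_journey_along_walk hB.2 W hW).imp fun _ ⟨hcov, hmap, harr⟩ =>
      ⟨hcov, hmap, harr.trans (Nat.mul_le_mul_left Δ hlen)⟩
  have hupper : OPT ≤ Δ * (2 * Fintype.card V - 3) := by
    obtain ⟨w, W, hcov, hlen⟩ := hB.1.exists_walk_covering hn s
    obtain ⟨J, hJ, -, harr⟩ := follow w W hcov hlen
    exact (hOPT.2 ⟨J, hJ, rfl⟩).trans harr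
  have hlower : Fintype.card V - 1 ≤ OPT := by
    obtain ⟨J, ⟨⟨-, hchain⟩, -, hcov⟩, rfl⟩ := hOPT.1
    have := card_le_length_add_one hcov
    have := add_length_le_arrival hchain (t := 0) fun _ _ => Nat.zero_le _
    omega
  refine ⟨⟨hlower, hupper⟩, follow, ?_, Nat.mul_le_mul_left _ hlower⟩
  obtain ⟨m, hm⟩ := Nat.exists_eq_add_of_le hn
  rw [hm, show 2 * (2 + m) - 3 = 2 * m + 1 by omega, show 2 + m - 1 = m + 1 by omega]
  nlinarith
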